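/- If f is the summatory function of an arithmetic function t, i.e., f(n) = Σ_{d|n} t(d), and gcd(m,n) = 1, then Σ_{k=1}^n f(gcd(k,n))·e^{-2πikm/n} = t(n). -/

import Mathlib

open Finset

/-!
Expanding `f (gcd k n) = ∑_{d ∣ gcd k n} g d` and swapping sums leaves, for each `d ∣ n`, the sum
of `ζ ^ k` over the multiples `k = d j` of `d` below `n`, where `ζ = e^{-2πim/n}` is a primitive
`n`-th root of unity. As `ζ ^ d` is a primitive `(n / d)`-th root of unity, this geometric sum
vanishes unless `d = n`.
-/

theorem Nat.filter_dvd_range_mul_eq_map (d c : ℕ) (hd : d ≠ 0) :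
    {k ∈ range (d * c) | d ∣ k} = (range c).map ⟨(d * ·), mul_right_injective₀ hd⟩ := by
  ext k
  simp only [mem_filter, mem_range, mem_map, Function.Embedding.coeFn_mk]
  constructor
  · rintro ⟨hk, j, rfl⟩
    exact ⟨j, Nat.lt_of_mul_lt_mul_left hk, rfl⟩
  · rintro ⟨j, hj, rfl⟩
    exact ⟨Nat.mul_lt_mul_of_pos_left hj (Nat.pos_of_ne_zero hd), dvd_mul_right d j⟩

theorem Finset.sum_Icc_one_eq_sum_range {M : Type*} [AddCommMonoid M] (h : ℕ → M) {n : ℕ}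
    (hper : h n = h 0) : ∑ k ∈ Icc 1 n, h k = ∑ k ∈ range n, h k := by
  rcases Nat.eq_zero_or_pos n with rfl | hn
  · simp
  rw [← Ico_add_one_right_eq_Icc, sum_Ico_succ_top hn, sum_range_eq_add_Ico h hn, hper,
    add_comm]

namespace IsPrimitiveRoot

variable {R : Type*} [CommRing R] [IsDomain R] {ζ : R} {n : ℕ}

theorem sum_range_filter_dvd_pow (hζ : IsPrimitiveRoot ζ n) (hn : 0 < n) {d : ℕ} (hd : d ∣ n) :
    ∑ k ∈ range n with d ∣ k, ζ ^ k = if d = n then 1 else 0 := by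
  obtain ⟨c, rfl⟩ := hd
  have hd0 : d ≠ 0 := left_ne_zero_of_mul hn.ne'
  have hc0 : c ≠ 0 := right_ne_zero_of_mul hn.ne'
  rw [Nat.filter_dvd_range_mul_eq_map d c hd0, sum_map]
  simp only [Function.Embedding.coeFn_mk, pow_mul]
  rcases eq_or_ne c 1 with rfl | hc1
  · simp
  · rw [if_neg (by simpa [hd0] using hc1), (hζ.pow hn rfl).geom_sum_eq_zero (by omega)]

theorem sum_range_sum_divisors_gcd_mul_pow (hζ : IsPrimitiveRoot ζ n) (hn : 0 < n) (g : ℕ → R) :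
    ∑ k ∈ range n, (∑ d ∈ (k.gcd n).divisors, g d) * ζ ^ k = g n := by
  have hdiv (k : ℕ) : (k.gcd n).divisors = {d ∈ n.divisors | d ∣ k} := by
    rw [← Nat.divisors_filter_dvd_of_dvd hn.ne' (Nat.gcd_dvd_right k n)]
    exact filter_congr fun d hd ↦ by
      rw [Nat.dvd_gcd_iff, and_iff_left (Nat.dvd_of_mem_divisors hd)]
  calc ∑ k ∈ range n, (∑ d ∈ (k.gcd n).divisors, g d) * ζ ^ k
      = ∑ d ∈ n.divisors, g d * (∑ k ∈ range n with d ∣ k, ζ ^ k) := by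
        simp_rw [hdiv, sum_filter, sum_mul, mul_sum, ite_mul, zero_mul, mul_ite, mul_zero]
        rw [sum_comm]
    _ = g n := by
        rw [sum_congr rfl fun d hd ↦ by
          rw [hζ.sum_range_filter_dvd_pow hn (Nat.dvd_of_mem_divisors hd)]]
        simp [hn.ne']

end IsPrimitiveRoot

theorem dft_summatory_gcd_eq (g f : ℕ → ℂ)
    (hfg : ∀ n : ℕ, 0 < n → f n = ∑ d ∈ n.divisors, g d)
    (n m : ℕ) (hn : 1 ≤ n) (hm : Nat.gcd m n = 1) :
    ∑ k ∈ Finset.Icc 1 n, f (Nat.gcd k n) *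
        Complex.exp (-(2 * Real.pi * Complex.I * k * m / n)) = g n := by
  set ζ := Complex.exp (2 * Real.pi * Complex.I * (m / n))
  have hζ : IsPrimitiveRoot ζ⁻¹ n :=
    (Complex.isPrimitiveRoot_exp_of_coprime m n (by omega) hm).inv
  have hexp (k : ℕ) : Complex.exp (-(2 * Real.pi * Complex.I * k * m / n)) = ζ⁻¹ ^ k := by
    rw [inv_pow, ← Complex.exp_nat_mul, ← Complex.exp_neg]
    ring_nf
  simp_rw [hexp]
  rw [sum_Icc_one_eq_sum_range _ (by simp [hζ.pow_eq_one]),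
    ← hζ.sum_range_sum_divisors_gcd_mul_pow hn g]
  exact sum_congr rfl fun k _ ↦ by rw [hfg _ (Nat.gcd_pos_of_pos_right k hn)]
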